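/- arXiv:1610.00585 — 2 statements merged into one kernel-verified Lean document; each statement's English description precedes it below -/
import Mathlib

section
/- If σ = 1, the optimal number of dinners for the Business Dinner Problem equals max( s, ⌈c/γ⌉, ⌈(s/t)·⌈c/γ⌉⌉ ). -/
/-!
A supplier meets each of the `c` customers exactly once and at most `γ` of them per dinner, so
attends at least `⌈c/γ⌉` dinners; with one supplier per table at most `t` suppliers attend a
dinner, whence `s ⌈c/γ⌉ ≤ t d`; and one customer meets the `s` suppliers at distinct dinners.

Conversely, cut the customers into `m = ⌈c/γ⌉` blocks of at most `γ` and let each block sit with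
a single supplier. A schedule is then a proper edge colouring of `K_{s,m}` by the `d` dinners with
at most `t` edges per colour (which de Werra's theorem provides). An explicit one suffices here:
supplier `i` meets block `g` at dinner `⌊i d / s⌋ + g mod d`. Since the offsets `⌊i d / s⌋` are
evenly spread, each window of `m` cyclically consecutive dinners holds at most `⌈m s / d⌉ ≤ t`
of them.
-/

/-- A schedule of `d` dinners for the Business Dinner Problem with `t` tables,
`s` suppliers, `c` customers, at most `σ` suppliers and at most `γ` customers
per table. `supSeat e i = some tb` means supplier `i` sits at table `tb` at
dinner `e` (and `none` means the supplier skips the dinner); similarly for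
customers. -/
structure BDSchedule (t s c σ γ d : ℕ) where
  supSeat : Fin d → Fin s → Option (Fin t)
  cusSeat : Fin d → Fin c → Option (Fin t)
  /-- at most `σ` suppliers at each table at each dinner -/
  supCap : ∀ (e : Fin d) (tb : Fin t),
    (Finset.univ.filter fun i : Fin s => supSeat e i = some tb).card ≤ σ
  /-- at most `γ` customers at each table at each dinner -/
  cusCap : ∀ (e : Fin d) (tb : Fin t),
    (Finset.univ.filter fun k : Fin c => cusSeat e k = some tb).card ≤ γ
  /-- every supplier and customer share a table at exactly one dinner -/
  meetOnce : ∀ (i : Fin s) (k : Fin c), ∃! e : Fin d,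
    ∃ tb : Fin t, supSeat e i = some tb ∧ cusSeat e k = some tb
  /-- two distinct suppliers share a table at no more than one dinner -/
  supPairOnce : ∀ i j : Fin s, i ≠ j →
    (Finset.univ.filter fun e : Fin d =>
      ∃ tb : Fin t, supSeat e i = some tb ∧ supSeat e j = some tb).card ≤ 1

open Finset Function

lemma toNat_ceil_div_eq_ceilDiv {α : Type*} [Field α] [LinearOrder α] [IsStrictOrderedRing α]
    [FloorRing α] (a b : ℕ) : ⌈(a : α) / b⌉.toNat = a ⌈/⌉ b := by
  rcases b.eq_zero_or_pos with rfl | hb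
  · simp
  refine eq_of_forall_ge_iff fun k => ?_
  rw [Int.toNat_le, Int.ceil_le, ceilDiv_le_iff_le_mul hb, div_le_iff₀ (by exact_mod_cast hb)]
  norm_cast
  rw [mul_comm]

lemma card_le_of_mul_div_mem_Ico {ι : Type*} {A : Finset ι} {f : ι → ℕ} (hf : Set.InjOn f A)
    {s m t d a : ℕ} (hs : 0 < s) (hsm : s * m ≤ t * d)
    (hA : ∀ i ∈ A, f i * d / s ∈ Ico a (a + m)) : #A ≤ t := by
  rw [← card_image_of_injOn hf]
  obtain hempty | hne := (A.image f).eq_empty_or_nonempty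
  · simp [hempty]
  have hwindow : ∀ j ∈ A.image f, a * s ≤ j * d ∧ j * d < a * s + t * d := by
    simp only [mem_image]
    rintro _ ⟨i, hi, rfl⟩
    obtain ⟨hlo, hhi⟩ := mem_Ico.1 (hA i hi)
    refine ⟨(Nat.le_div_iff_mul_le hs).1 hlo, ((Nat.div_lt_iff_lt_mul hs).1 hhi).trans_le ?_⟩
    rw [add_mul, mul_comm m]
    exact Nat.add_le_add_left hsm _
  set j₀ := (A.image f).min' hne
  have hj₀ := hwindow j₀ (min'_mem _ hne)
  calc #(A.image f) ≤ #(Ico j₀ (j₀ + t)) := card_le_card fun j hj => by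
        refine mem_Ico.2 ⟨min'_le _ _ hj, Nat.lt_of_mul_lt_mul_right (a := d) ?_⟩
        linarith [hwindow j hj]
    _ = t := by simp

lemma add_ite_mem_Ico_of_add_mod_eq {p g e d m : ℕ} (hp : p < d) (hg : g < m) (hmd : m ≤ d)
    (he : (p + g) % d = e) :
    p + (if p ≤ e then d else 0) ∈ Ico (e + d + 1 - m) (e + d + 1 - m + m) := by
  rw [Nat.add_mod_eq_ite, Nat.mod_eq_of_lt hp, Nat.mod_eq_of_lt (hg.trans_le hmd)] at he
  rw [mem_Ico]
  split_ifs at he ⊢ <;> omega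

lemma strictMono_mul_div {s d : ℕ} (hs : 0 < s) (hsd : s ≤ d) : StrictMono fun i => i * d / s := by
  intro i j hij
  rw [← Nat.add_one_le_iff, Nat.le_div_iff_mul_le hs, add_mul, one_mul]
  calc i * d / s * s + s ≤ i * d + d := Nat.add_le_add (Nat.div_mul_le_self _ _) hsd
    _ = (i + 1) * d := by ring
    _ ≤ j * d := Nat.mul_le_mul_right _ hij

lemma mul_div_lt {i s d : ℕ} (hi : i < s) (hd : 0 < d) : i * d / s < d :=
  Nat.div_lt_of_lt_mul (Nat.mul_lt_mul_of_pos_right hi hd)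

lemma exists_fin_map_card_fiber_le {c γ m : ℕ} (hγ : 0 < γ) (hcm : c ≤ γ * m) :
    ∃ block : Fin c → Fin m, ∀ g, #{k | block k = g} ≤ γ := by
  refine ⟨fun k => ⟨k / γ, Nat.div_lt_of_lt_mul (k.2.trans_le hcm)⟩, fun g => ?_⟩
  calc #{k : Fin c | (⟨k / γ, _⟩ : Fin m) = g} ≤ #(Ico (g * γ) (g * γ + γ)) :=
        card_le_card_of_injOn Fin.val (fun k hk => by
          simp only [coe_filter, Set.mem_ofPred_eq, Fin.ext_iff, mem_univ, true_and] at hk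
          simp only [coe_Ico, Set.mem_Ico]
          rw [Nat.div_eq_iff hγ] at hk
          omega) Fin.val_injective.injOn
    _ = γ := by simp

namespace BDSchedule

variable {t s c σ γ d : ℕ} (B : BDSchedule t s c σ γ d)

noncomputable def meetDinner (i : Fin s) (k : Fin c) : Fin d :=
  (B.meetOnce i k).exists.choose

lemma exists_table_meetDinner (i : Fin s) (k : Fin c) :
    ∃ tb, B.supSeat (B.meetDinner i k) i = some tb ∧ B.cusSeat (B.meetDinner i k) k = some tb :=
  (B.meetOnce i k).exists.choose_spec

lemma card_suppliers_with_le (e : Fin d) (k : Fin c) :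
    #{i | ∃ tb, B.supSeat e i = some tb ∧ B.cusSeat e k = some tb} ≤ σ := by
  cases h : B.cusSeat e k with
  | none => simp
  | some tb =>
    refine le_trans (card_le_card fun i hi => ?_) (B.supCap e tb)
    simp_all

lemma card_customers_with_le (e : Fin d) (i : Fin s) :
    #{k | ∃ tb, B.supSeat e i = some tb ∧ B.cusSeat e k = some tb} ≤ γ := by
  cases h : B.supSeat e i with
  | none => simp
  | some tb =>
    refine le_trans (card_le_card fun k hk => ?_) (B.cusCap e tb)
    simp_all

lemma card_suppliers_le (B : BDSchedule t s c σ γ d) (hc : 0 < c) : s ≤ σ * d := by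
  classical
  let k : Fin c := ⟨0, hc⟩
  simpa using card_le_mul_card_image_of_maps_to (f := (B.meetDinner · k)) (s := univ) (t := univ)
    (fun _ _ => mem_univ _) σ fun e _ => (card_le_card fun i hi => by
      obtain ⟨tb, h⟩ := B.exists_table_meetDinner i k
      simp only [mem_filter, mem_univ, true_and] at hi ⊢
      exact ⟨tb, hi ▸ h⟩).trans (B.card_suppliers_with_le e k)

lemma customers_le_mul_card_attended (i : Fin s) :
    c ≤ γ * #{e | (B.supSeat e i).isSome} := by
  classical
  simpa using card_le_mul_card_image_of_maps_to (f := B.meetDinner i) (s := univ)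
    (t := {e | (B.supSeat e i).isSome})
    (fun k _ => by obtain ⟨tb, h, -⟩ := B.exists_table_meetDinner i k; simp [h]) γ
    fun e _ => (card_le_card fun k hk => by
      obtain ⟨tb, h⟩ := B.exists_table_meetDinner i k
      simp only [mem_filter, mem_univ, true_and] at hk ⊢
      exact ⟨tb, hk ▸ h⟩).trans (B.card_customers_with_le e i)

lemma card_attending_le (e : Fin d) : #{i | (B.supSeat e i).isSome} ≤ t * σ := by
  classical
  calc #{i | (B.supSeat e i).isSome}
      ≤ #(univ.biUnion fun tb => {i | B.supSeat e i = some tb}) :=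
        card_le_card fun i hi => by
          obtain ⟨tb, h⟩ := Option.isSome_iff_exists.1 (mem_filter.1 hi).2
          simp [h]
    _ ≤ ∑ tb, #{i | B.supSeat e i = some tb} := card_biUnion_le
    _ ≤ ∑ _tb : Fin t, σ := sum_le_sum fun tb _ => B.supCap e tb
    _ = t * σ := by simp

lemma sum_card_attended_le : ∑ i, #{e | (B.supSeat e i).isSome} ≤ d * (t * σ) := by
  calc ∑ i, #{e | (B.supSeat e i).isSome} = ∑ e, #{i | (B.supSeat e i).isSome} :=
        sum_card_bipartiteAbove_eq_sum_card_bipartiteBelow _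
    _ ≤ ∑ _e : Fin d, t * σ := sum_le_sum fun e _ => B.card_attending_le e
    _ = d * (t * σ) := by simp

lemma ceilDiv_le_card_attended (hγ : 0 < γ) (i : Fin s) :
    c ⌈/⌉ γ ≤ #{e | (B.supSeat e i).isSome} :=
  (ceilDiv_le_iff_le_mul hγ).2 (B.customers_le_mul_card_attended i)

lemma ceilDiv_le (B : BDSchedule t s c σ γ d) (hγ : 0 < γ) (hs : 0 < s) : c ⌈/⌉ γ ≤ d :=
  (B.ceilDiv_le_card_attended hγ ⟨0, hs⟩).trans ((card_filter_le _ _).trans (by simp))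

lemma mul_ceilDiv_le (B : BDSchedule t s c σ γ d) (hγ : 0 < γ) :
    s * (c ⌈/⌉ γ) ≤ d * (t * σ) :=
  calc s * (c ⌈/⌉ γ) = ∑ _i : Fin s, c ⌈/⌉ γ := by simp
    _ ≤ ∑ i, #{e | (B.supSeat e i).isSome} :=
        sum_le_sum fun i _ => B.ceilDiv_le_card_attended hγ i
    _ ≤ d * (t * σ) := B.sum_card_attended_le

end BDSchedule

/-- A proper edge colouring of `K_{s,m}` (suppliers against customer blocks) by `d` dinners in
which every dinner is used by at most `t` suppliers. -/
structure MeetingPlan (t s m d : ℕ) where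
  dinner : Fin s → Fin m → Fin d
  injective_dinner : ∀ i, Injective (dinner i)
  injective_dinner_left : ∀ g, Injective (dinner · g)
  card_le : ∀ e, #{i | ∃ g, dinner i g = e} ≤ t

namespace MeetingPlan

def cyclic {t s m d : ℕ} (hsd : s ≤ d) (hmd : m ≤ d) (hsm : s * m ≤ t * d) :
    MeetingPlan t s m d where
  dinner i g := ⟨(i * d / s + g) % d, Nat.mod_lt _ (i.pos.trans_le hsd)⟩
  injective_dinner i g g' h := Fin.ext <|
    (Nat.ModEq.add_left_cancel' _ (congrArg Fin.val h)).eq_of_lt_of_lt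
      (g.2.trans_le hmd) (g'.2.trans_le hmd)
  injective_dinner_left g i j h := by
    have hd := i.pos.trans_le hsd
    refine Fin.ext ((strictMono_mul_div i.pos hsd).injective ?_)
    exact (Nat.ModEq.add_right_cancel' _ (congrArg Fin.val h)).eq_of_lt_of_lt
      (mul_div_lt i.2 hd) (mul_div_lt j.2 hd)
  card_le e := by
    obtain rfl | hs := s.eq_zero_or_pos
    · simp
    -- suppliers whose offset is at most `e` are shifted by one full cycle, so that all offsets
    -- meeting a block at dinner `e` lie in the window `[e + d + 1 - m, e + d]`
    let f : Fin s → ℕ := fun i => if (i : ℕ) * d / s ≤ e then i + s else i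
    have hf : ∀ i : Fin s, f i * d / s = i * d / s + if (i : ℕ) * d / s ≤ e then d else 0 := by
      intro i
      simp only [f]
      split_ifs
      · rw [add_mul, Nat.add_mul_div_left _ _ hs]
      · rfl
    refine card_le_of_mul_div_mem_Ico (f := f) (a := e + d + 1 - m) (fun i _ j _ hij => ?_) hs hsm
      fun i hi => ?_
    · simp only [f] at hij
      ext
      split_ifs at hij <;> omega
    · obtain ⟨g, hg⟩ := (mem_filter.1 hi).2
      rw [hf]
      exact add_ite_mem_Ico_of_add_mod_eq (mul_div_lt i.2 e.pos) g.2 hmd (congrArg Fin.val hg)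

variable {t s m d c : ℕ} (P : MeetingPlan t s m d)

noncomputable def table (e : Fin d) : {i // ∃ g, P.dinner i g = e} ↪ Fin t :=
  Classical.choice <| Embedding.nonempty_of_card_le <| by
    simpa [Fintype.card_subtype] using P.card_le e

noncomputable def supSeat (e : Fin d) (i : Fin s) : Option (Fin t) :=
  if h : ∃ g, P.dinner i g = e then some (P.table e ⟨i, h⟩) else none

noncomputable def cusSeat (block : Fin c → Fin m) (e : Fin d) (k : Fin c) : Option (Fin t) :=
  if h : ∃ i, P.dinner i (block k) = e then P.supSeat e h.choose else none

lemma isSome_supSeat_dinner (i : Fin s) (g : Fin m) : (P.supSeat (P.dinner i g) i).isSome := by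
  simp [supSeat]

lemma eq_of_supSeat_eq_some {e : Fin d} {i j : Fin s} {tb : Fin t}
    (hi : P.supSeat e i = some tb) (hj : P.supSeat e j = some tb) : i = j := by
  unfold supSeat at hi hj
  split_ifs at hi hj
  exact congrArg Subtype.val ((P.table e).injective (Option.some_injective _ (hi.trans hj.symm)))

lemma cusSeat_of_dinner_eq {block : Fin c → Fin m} {e : Fin d} {i : Fin s} {k : Fin c}
    (h : P.dinner i (block k) = e) : P.cusSeat block e k = P.supSeat e i := by
  have hex : ∃ i, P.dinner i (block k) = e := ⟨i, h⟩
  rw [cusSeat, dif_pos hex, P.injective_dinner_left _ (hex.choose_spec.trans h.symm)]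

lemma exists_of_cusSeat_eq_some {block : Fin c → Fin m} {e : Fin d} {k : Fin c} {tb : Fin t}
    (h : P.cusSeat block e k = some tb) :
    ∃ i, P.dinner i (block k) = e ∧ P.supSeat e i = some tb := by
  unfold cusSeat at h
  split_ifs at h with hex
  exact ⟨_, hex.choose_spec, h⟩

lemma sit_together_iff {block : Fin c → Fin m} {e : Fin d} {i : Fin s} {k : Fin c} :
    (∃ tb, P.supSeat e i = some tb ∧ P.cusSeat block e k = some tb) ↔
      P.dinner i (block k) = e := by
  constructor
  · rintro ⟨tb, hi, hk⟩
    obtain ⟨j, hj, hj'⟩ := P.exists_of_cusSeat_eq_some hk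
    rwa [P.eq_of_supSeat_eq_some hi hj']
  · rintro rfl
    obtain ⟨tb, h⟩ := Option.isSome_iff_exists.1 (P.isSome_supSeat_dinner i (block k))
    exact ⟨tb, h, (P.cusSeat_of_dinner_eq rfl).trans h⟩

noncomputable def toSchedule {γ : ℕ} (block : Fin c → Fin m)
    (hblock : ∀ g, #{k | block k = g} ≤ γ) : BDSchedule t s c 1 γ d where
  supSeat := P.supSeat
  cusSeat := P.cusSeat block
  supCap e tb := card_le_one.2 fun i hi j hj =>
    P.eq_of_supSeat_eq_some (mem_filter.1 hi).2 (mem_filter.1 hj).2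
  cusCap e tb := by
    obtain hempty | ⟨k₀, hk₀⟩ :=
      (univ.filter fun k => P.cusSeat block e k = some tb).eq_empty_or_nonempty
    · simp [hempty]
    obtain ⟨i₀, hi₀, hi₀'⟩ := P.exists_of_cusSeat_eq_some (mem_filter.1 hk₀).2
    refine le_trans (card_le_card fun k hk => ?_) (hblock (block k₀))
    obtain ⟨i, hi, hi'⟩ := P.exists_of_cusSeat_eq_some (mem_filter.1 hk).2
    rw [P.eq_of_supSeat_eq_some hi' hi₀'] at hi
    simpa using P.injective_dinner i₀ (hi.trans hi₀.symm)
  meetOnce i k := ⟨P.dinner i (block k), P.sit_together_iff.2 rfl,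
    fun _ h => (P.sit_together_iff.1 h).symm⟩
  supPairOnce i j hij := by
    simp only [card_le_one, mem_filter]
    rintro e ⟨-, tb, hi, hj⟩
    exact absurd (P.eq_of_supSeat_eq_some hi hj) hij

end MeetingPlan

/-- If `σ = 1`, the optimal number of dinners is
`max(s, ⌈c/γ⌉, ⌈(s/t)·⌈c/γ⌉⌉)`. -/
theorem business_dinner_sigma_one (t s c γ : ℕ)
    (ht : 1 ≤ t) (hγ : 1 ≤ γ) (hs : 1 ≤ s) (hc : 1 ≤ c) :
    IsLeast {d : ℕ | Nonempty (BDSchedule t s c 1 γ d)}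
      (max s (max (⌈(c : ℚ) / γ⌉.toNat)
        (⌈(s : ℚ) / t * (⌈(c : ℚ) / γ⌉ : ℚ)⌉.toNat))) := by
  have hm : ⌈(c : ℚ) / γ⌉.toNat = c ⌈/⌉ γ := toNat_ceil_div_eq_ceilDiv c γ
  have hk : ⌈(s : ℚ) / t * (⌈(c : ℚ) / γ⌉ : ℚ)⌉.toNat = s * (c ⌈/⌉ γ) ⌈/⌉ t := by
    have hnn : 0 ≤ ⌈(c : ℚ) / γ⌉ := Int.ceil_nonneg (by positivity)
    have hcast : ((⌈(c : ℚ) / γ⌉ : ℤ) : ℚ) = (c ⌈/⌉ γ : ℕ) := by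
      rw [← hm, ← Int.cast_natCast (R := ℚ) (⌈(c : ℚ) / γ⌉.toNat), Int.toNat_of_nonneg hnn]
    rw [hcast, ← toNat_ceil_div_eq_ceilDiv (α := ℚ) (s * (c ⌈/⌉ γ)) t, Nat.cast_mul,
      mul_div_right_comm]
  have hle : ∀ d, max s (max (c ⌈/⌉ γ) (s * (c ⌈/⌉ γ) ⌈/⌉ t)) ≤ d ↔
      s ≤ d ∧ c ⌈/⌉ γ ≤ d ∧ s * (c ⌈/⌉ γ) ≤ t * d := fun d => by
    simp only [max_le_iff, ceilDiv_le_iff_le_mul (show 0 < t from ht)]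
  rw [hm, hk]
  refine ⟨?_, fun d ⟨B⟩ => (hle d).2 ⟨by simpa using B.card_suppliers_le hc, B.ceilDiv_le hγ hs,
    by simpa [mul_comm] using B.mul_ceilDiv_le hγ⟩⟩
  obtain ⟨hsd, hmd, hsm⟩ := (hle _).1 le_rfl
  obtain ⟨block, hblock⟩ := exists_fin_map_card_fiber_le hγ ((ceilDiv_le_iff_le_mul hγ).1 le_rfl)
  exact ⟨(MeetingPlan.cyclic hsd hmd hsm).toSchedule block hblock⟩
end

section
/- For the Business Dinner Problem with t = 2 tables, s = 4 suppliers, σ = 2, and ⌈c/γ⌉ = 2 customer groups, no feasible schedule with 2 dinners exists, and an optimal schedule uses exactly 3 dinners. -/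
/-!
If `γ < c ≤ 2γ`, no supplier can meet all customers at a single dinner, so every schedule has at
least two dinners. Two are not enough: fix a customer `k₀`. At most two suppliers meet `k₀` at
each dinner, so exactly two, `b` and `b'`, meet it at dinner `1`, where they share its table. At
dinner `0` both must be seated (they still have customers to meet) but not at `k₀`'s table
(they would meet `k₀` twice), so they share the other table, and hence meet twice.
Three dinners suffice: split the customers into two fixed groups of size at most `γ`, one per
table, and seat each supplier once at each table so that suppliers share a table only at the
first dinner.
-/

open Finset

theorem exists_fiber_card_le {c m n : ℕ} (h : c ≤ m * n) :
    ∃ g : Fin c → Fin m, ∀ j, #{k | g k = j} ≤ n := by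
  let emb : Fin c ↪ Fin m × Fin n :=
    (Fin.castLEEmb h).trans finProdFinEquiv.symm.toEmbedding
  refine ⟨fun k => (emb k).1, fun j => ?_⟩
  refine (card_le_card_of_injOn (fun k => (emb k).2) (fun _ _ => mem_univ _) ?_).trans_eq
    (card_fin n)
  intro a ha b hb hab
  simp only [coe_filter, mem_univ, true_and, Set.mem_ofPred_eq] at ha hb
  exact emb.injective (Prod.ext (ha.trans hb.symm) hab)

theorem lt_and_le_two_mul_of_ceil_div_eq_two {c γ : ℕ} (h : ⌈(c : ℚ) / γ⌉ = 2) :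
    γ < c ∧ c ≤ 2 * γ := by
  rcases Nat.eq_zero_or_pos γ with rfl | hγ
  · simp at h
  have hγ' : (0 : ℚ) < γ := by exact_mod_cast hγ
  obtain ⟨h1, h2⟩ := Int.ceil_eq_iff.1 h
  push_cast at h1 h2
  rw [lt_div_iff₀ hγ'] at h1
  rw [div_le_iff₀ hγ'] at h2
  exact ⟨by exact_mod_cast (by linarith : (γ : ℚ) < c), by exact_mod_cast h2⟩

namespace BDSchedule

variable {t s c σ γ d : ℕ}

def Meets (S : BDSchedule t s c σ γ d) (e : Fin d) (i : Fin s) (k : Fin c) : Prop :=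
  ∃ tb, S.supSeat e i = some tb ∧ S.cusSeat e k = some tb

instance (S : BDSchedule t s c σ γ d) (e : Fin d) (i : Fin s) (k : Fin c) :
    Decidable (S.Meets e i k) := by
  unfold Meets; infer_instance

theorem card_customers_meeting_le (S : BDSchedule t s c σ γ d) (e : Fin d) (i : Fin s) :
    #{k | S.Meets e i k} ≤ γ := by
  cases hi : S.supSeat e i with
  | none => simp [Meets, hi]
  | some tb =>
    refine (card_le_card fun k hk => ?_).trans (S.cusCap e tb)
    obtain ⟨tb', hi', hk⟩ := (mem_filter.1 hk).2
    rw [hi, Option.some_inj] at hi'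
    simpa [hi'] using hk

theorem card_suppliers_meeting_le (S : BDSchedule t s c σ γ d) (e : Fin d) (k : Fin c) :
    #{i | S.Meets e i k} ≤ σ := by
  cases hk : S.cusSeat e k with
  | none => simp [Meets, hk]
  | some tb =>
    refine (card_le_card fun i hi => ?_).trans (S.supCap e tb)
    obtain ⟨tb', hi, hk'⟩ := (mem_filter.1 hi).2
    rw [hk, Option.some_inj] at hk'
    simpa [hk'] using hi

theorem exists_meets_ne (S : BDSchedule t s c σ γ d) (hγc : γ < c) (i : Fin s) (e : Fin d) :
    ∃ e' ≠ e, ∃ k, S.Meets e' i k := by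
  by_contra! h
  have hall : ∀ k, S.Meets e i k := fun k => by
    obtain ⟨e', he'⟩ := (S.meetOnce i k).exists
    obtain rfl : e' = e := by_contra fun hne => h e' hne k he'
    exact he'
  have := S.card_customers_meeting_le e i
  simp [hall] at this
  omega

theorem two_le_dinners (S : BDSchedule t s c σ γ d) (hs : 0 < s) (hγc : γ < c) : 2 ≤ d := by
  obtain ⟨e, -⟩ := (S.meetOnce ⟨0, hs⟩ ⟨0, by omega⟩).exists
  obtain ⟨e', he', -⟩ := S.exists_meets_ne hγc ⟨0, hs⟩ e
  have := Fin.val_ne_of_ne he'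
  omega

def ofFixedGroups (plan : Fin d → Fin s → Option (Fin t))
    (hcap : ∀ e tb, #{i | plan e i = some tb} ≤ σ)
    (hvisit : ∀ i tb, ∃! e, plan e i = some tb)
    (hpair : ∀ i j, i ≠ j → #{e | ∃ tb, plan e i = some tb ∧ plan e j = some tb} ≤ 1)
    (group : Fin c → Fin t) (hgroup : ∀ tb, #{k | group k = tb} ≤ γ) :
    BDSchedule t s c σ γ d where
  supSeat := plan
  cusSeat _ k := some (group k)
  supCap := hcap
  cusCap _ tb := by simpa using hgroup tb
  meetOnce i k := by simpa using hvisit i (group k)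
  supPairOnce := hpair

theorem not_nonempty_two_dinners (hγc : γ < c) : ¬ Nonempty (BDSchedule 2 4 c 2 γ 2) := by
  rintro ⟨S⟩
  let k₀ : Fin c := ⟨0, by omega⟩
  choose f hf using fun i => (S.meetOnce i k₀).exists
  have hfiber : ∀ e, #{i | f i = e} ≤ 2 := fun e =>
    (card_le_card fun i hi => by
      simp only [mem_filter_univ] at hi ⊢
      exact hi ▸ hf i).trans (S.card_suppliers_meeting_le e k₀)
  have hsplit : #{i | f i = 0} + #{i | f i = 1} = 4 := by
    simpa [show ∀ x : Fin 2, x ≠ 0 ↔ x = 1 by decide]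
      using card_filter_add_card_filter_not (s := univ) (f · = 0)
  obtain ⟨a, ha⟩ := card_pos.1 (by linarith [hfiber 1] : 0 < #{i | f i = 0})
  simp only [mem_filter_univ] at ha
  obtain ⟨b, hb, b', hb', hbb'⟩ := one_lt_card.1 (by linarith [hfiber 0] : 1 < #{i | f i = 1})
  simp only [mem_filter_univ] at hb hb'
  obtain ⟨T, -, hT⟩ := ha ▸ hf a
  have away : ∀ j, f j = 1 → ∃ u, u ≠ T ∧ S.supSeat 0 j = some u := by
    intro j hj
    obtain ⟨e, he, k, u, hu, -⟩ := S.exists_meets_ne hγc j 1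
    obtain rfl : e = 0 := by omega
    refine ⟨u, ?_, hu⟩
    rintro rfl
    exact absurd ((S.meetOnce j k₀).unique ⟨u, hu, hT⟩ (hj ▸ hf j)) (by decide)
  obtain ⟨u, huT, hu⟩ := away b hb
  obtain ⟨u', hu'T, hu'⟩ := away b' hb'
  obtain rfl : u = u' := by omega
  obtain ⟨v, hv, hk⟩ := hb ▸ hf b
  obtain ⟨v', hv', hk'⟩ := hb' ▸ hf b'
  obtain rfl : v = v' := Option.some_inj.1 (hk.symm.trans hk')
  have htogether : ∀ e, ∃ tb, S.supSeat e b = some tb ∧ S.supSeat e b' = some tb := by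
    intro e
    fin_cases e
    exacts [⟨u, hu, hu'⟩, ⟨v, hv, hv'⟩]
  have := S.supPairOnce b b' hbb'
  simp [htogether] at this

def threeDinnerPlan : Fin 3 → Fin 4 → Option (Fin 2) :=
  ![![some 0, some 0, some 1, some 1],
    ![some 1, none, some 0, none],
    ![none, some 1, none, some 0]]

theorem nonempty_three_dinners (hc : c ≤ 2 * γ) : Nonempty (BDSchedule 2 4 c 2 γ 3) := by
  obtain ⟨group, hgroup⟩ := exists_fiber_card_le hc
  have hvisit : ∀ i tb, ∃! e, threeDinnerPlan e i = some tb := by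
    simp only [Fintype.existsUnique_iff_card_one]
    decide
  exact ⟨.ofFixedGroups threeDinnerPlan (by decide) hvisit (by decide) group hgroup⟩

end BDSchedule

theorem business_dinner_exceptional_case_general (c γ : ℕ)
    (h2 : ⌈(c : ℚ) / γ⌉ = 2) :
    ¬ Nonempty (BDSchedule 2 4 c 2 γ 2) ∧
    IsLeast {d : ℕ | Nonempty (BDSchedule 2 4 c 2 γ d)} 3 := by
  obtain ⟨hγc, hc⟩ := lt_and_le_two_mul_of_ceil_div_eq_two h2
  refine ⟨BDSchedule.not_nonempty_two_dinners hγc, BDSchedule.nonempty_three_dinners hc, ?_⟩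
  rintro d ⟨S⟩
  refine (S.two_le_dinners (by norm_num) hγc).lt_of_ne ?_
  rintro rfl
  exact BDSchedule.not_nonempty_two_dinners hγc ⟨S⟩

/-- The exceptional case `(m, 2n) = (2, 4)`: with `t = 2` tables, `s = 4`
suppliers, `σ = 2` and `⌈c/γ⌉ = 2`, there is no feasible schedule in `2`
dinners and the optimal schedule uses exactly `3` dinners. -/
theorem business_dinner_exceptional_case (c γ : ℕ) (hγ : 1 ≤ γ) (hc : 1 ≤ c)
    (h2 : ⌈(c : ℚ) / γ⌉ = 2) :
    ¬ Nonempty (BDSchedule 2 4 c 2 γ 2) ∧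
    IsLeast {d : ℕ | Nonempty (BDSchedule 2 4 c 2 γ d)} 3 :=
  business_dinner_exceptional_case_general c γ h2
end
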